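/- arXiv:2212.05368 — 2 statements merged into one kernel-verified Lean document; each statement's English description precedes it below -/
import Mathlib

section
/- For p a 2π-periodic even continuous function (p(−x) = p(x) for all x), the function x ↦ (1/2π)∫₀^{2π} (p(x)p(y) sin(x−y) + (p(x)p'(y) − p'(x)p(y))cos(x−y)) / |(p(x)−p(y))² + 4p(x)p(y)sin²((x−y)/2)|^{α/2} dy is odd in x, provided p is C¹, strictly positive, and the integral converges absolutely. -/
open Real

/-! Writing `K x y` for the integrand, evenness of `p` (hence oddness of `p'`) gives
`K (-x) y = -K x (-y)`; the reflection `y ↦ -y` maps `[0, 2π]` onto `[-2π, 0]`, and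
periodicity of `K x` in `y` moves that back to `[0, 2π]`. -/

theorem Function.Even.deriv_odd {f : ℝ → ℝ} (hf : Function.Even f) : Function.Odd (deriv f) := by
  intro x
  have h := deriv_comp_neg f x
  rw [funext hf] at h
  linarith

theorem Function.Periodic.deriv {f : ℝ → ℝ} {T : ℝ} (hf : Function.Periodic f T) :
    Function.Periodic (deriv f) T := fun x => by
  rw [← deriv_comp_add_const, funext hf]

theorem Function.Periodic.intervalIntegral_comp_neg {E : Type*} [NormedAddCommGroup E]
    [NormedSpace ℝ E] {f : ℝ → E} {T : ℝ} (hf : Function.Periodic f T) :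
    ∫ x in (0:ℝ)..T, f (-x) = ∫ x in (0:ℝ)..T, f x := by
  rw [intervalIntegral.integral_comp_neg]
  simpa using hf.intervalIntegral_add_eq (-T) 0

noncomputable def contourKernel (α : ℝ) (p : ℝ → ℝ) (x y : ℝ) : ℝ :=
  (p x * p y * Real.sin (x - y) + (p x * deriv p y - deriv p x * p y) * Real.cos (x - y))
    / |(p x - p y) ^ 2 + 4 * p x * p y * Real.sin ((x - y) / 2) ^ 2| ^ (α / 2)

theorem contourKernel_neg_left {α : ℝ} {p : ℝ → ℝ} (hp : Function.Even p) (x y : ℝ) :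
    contourKernel α p (-x) y = -contourKernel α p x (-y) := by
  have hsub : -x - y = -(x - -y) := by ring
  have hhalf : (-x - y) / 2 = -((x - -y) / 2) := by ring
  rw [contourKernel, contourKernel, hp x, hp y, hp.deriv_odd x, hp.deriv_odd y, hhalf, hsub,
    Real.sin_neg, Real.cos_neg, Real.sin_neg, neg_sq, ← neg_div]
  congr 1
  ring

theorem contourKernel_periodic {α : ℝ} {p : ℝ → ℝ} (hp : Function.Periodic p (2 * π)) (x : ℝ) :
    Function.Periodic (contourKernel α p x) (2 * π) := fun y => by
  have hsub : x - (y + 2 * π) = x - y - 2 * π := by ring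
  have hhalf : (x - y - 2 * π) / 2 = (x - y) / 2 - π := by ring
  simp only [contourKernel, hp y, hp.deriv y, hsub, hhalf, Real.sin_sub_two_pi,
    Real.cos_sub_two_pi, Real.sin_sub_pi, neg_sq]

theorem contour_functional_odd_general
    (α : ℝ)
    (p : ℝ → ℝ) (hper : Function.Periodic p (2 * π))
    (heven : ∀ x, p (-x) = p x) :
    ∀ x : ℝ,
      (1 / (2 * π)) * ∫ y in (0:ℝ)..(2 * π),
          (p (-x) * p y * Real.sin (-x - y)
            + (p (-x) * deriv p y - deriv p (-x) * p y) * Real.cos (-x - y))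
          / |(p (-x) - p y) ^ 2 + 4 * p (-x) * p y * Real.sin ((-x - y) / 2) ^ 2| ^ (α / 2)
      = -((1 / (2 * π)) * ∫ y in (0:ℝ)..(2 * π),
          (p x * p y * Real.sin (x - y)
            + (p x * deriv p y - deriv p x * p y) * Real.cos (x - y))
          / |(p x - p y) ^ 2 + 4 * p x * p y * Real.sin ((x - y) / 2) ^ 2| ^ (α / 2)) := by
  intro x
  change (1 / (2 * π)) * ∫ y in (0:ℝ)..(2 * π), contourKernel α p (-x) y
    = -((1 / (2 * π)) * ∫ y in (0:ℝ)..(2 * π), contourKernel α p x y)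
  simp only [contourKernel_neg_left heven, intervalIntegral.integral_neg,
    (contourKernel_periodic hper x).intervalIntegral_comp_neg, mul_neg]

/-- The self-interaction part of the contour dynamics functional maps even profiles to
odd functions: for `p` C¹, `2π`-periodic, even and strictly positive with absolutely
convergent integrand, the mean-value integral is odd in `x`. -/
theorem contour_functional_odd
    (α : ℝ) (hα1 : 1 ≤ α) (hα2 : α < 2)
    (p : ℝ → ℝ) (hp : ContDiff ℝ 1 p) (hper : Function.Periodic p (2 * π))
    (heven : ∀ x, p (-x) = p x) (hpos : ∀ x, 0 < p x)
    (hint : ∀ x : ℝ, IntervalIntegrable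
      (fun y =>
        (p x * p y * Real.sin (x - y)
          + (p x * deriv p y - deriv p x * p y) * Real.cos (x - y))
        / |(p x - p y) ^ 2 + 4 * p x * p y * Real.sin ((x - y) / 2) ^ 2| ^ (α / 2))
      MeasureTheory.volume 0 (2 * π)) :
    ∀ x : ℝ,
      (1 / (2 * π)) * ∫ y in (0:ℝ)..(2 * π),
          (p (-x) * p y * Real.sin (-x - y)
            + (p (-x) * deriv p y - deriv p (-x) * p y) * Real.cos (-x - y))
          / |(p (-x) - p y) ^ 2 + 4 * p (-x) * p y * Real.sin ((-x - y) / 2) ^ 2| ^ (α / 2)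
      = -((1 / (2 * π)) * ∫ y in (0:ℝ)..(2 * π),
          (p x * p y * Real.sin (x - y)
            + (p x * deriv p y - deriv p x * p y) * Real.cos (x - y))
          / |(p x - p y) ^ 2 + 4 * p x * p y * Real.sin ((x - y) / 2) ^ 2| ^ (α / 2)) :=
  contour_functional_odd_general α p hper heven
end

section
/- For |x−y| small and g bounded, D_α(g)(x,y) := b^{2+2α}ε^{2+2α}(g(x)−g(y))² + 4(1+ε|ε|^α b^{1+α}g(x))(1+ε|ε|^α b^{1+α}g(y))sin²((x−y)/2) satisfies c₁·sin²((x−y)/2) ≤ D_α(g)(x,y) ≤ c₂·(x−y)² for positive constants c₁, c₂, provided g is Lipschitz with constant L, |ε| < 1/2, b > 0, and ε|ε|^α b^{1+α}‖g‖_∞ ≤ 1/2. -/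
/-!
Write `t = ε |ε|^α b^{1+α}`. The smallness assumption gives `|t g| ≤ 1/2`, so both factors
`1 + t g(x)` and `1 + t g(y)` lie in `[1/2, 3/2]` and their product, times 4, lies in `[1, 9]`.
The lower bound then drops the nonnegative first term; the upper bound uses the Lipschitz bound
on `g x - g y` and `sin² u ≤ u²`. Neither bound needs `|x - y|` small.
-/

open Real

-- Equality fails only at `ε = 0, α = -1`, where `0 ^ (0 : ℝ) = 1`.
theorem abs_mul_abs_rpow_le (ε α : ℝ) : |ε * |ε| ^ α| ≤ |ε| ^ (1 + α) := by
  rcases eq_or_ne ε 0 with rfl | hε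
  · simpa using rpow_nonneg le_rfl (1 + α)
  · rw [rpow_add (abs_pos.2 hε), rpow_one, abs_mul,
      abs_of_nonneg (rpow_nonneg (abs_nonneg ε) α)]

theorem one_add_mul_mem_Icc {t u M : ℝ} (ht : |t| * M ≤ 1 / 2) (hu : |u| ≤ M) :
    1 / 2 ≤ 1 + t * u ∧ 1 + t * u ≤ 3 / 2 := by
  have htu : |t * u| ≤ 1 / 2 := by
    rw [abs_mul]
    exact (mul_le_mul_of_nonneg_left hu (abs_nonneg t)).trans ht
  constructor <;> linarith [abs_le.1 htu]

theorem sq_le_add_four_mul_mul_sq {E A B d s : ℝ} (hE : 0 ≤ E) (hA : 1 / 2 ≤ A)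
    (hB : 1 / 2 ≤ B) :
    s ^ 2 ≤ E * d ^ 2 + 4 * A * B * s ^ 2 := by
  have hAB : 1 ≤ 4 * A * B := by nlinarith
  nlinarith [mul_nonneg hE (sq_nonneg d), sq_nonneg s]

theorem add_four_mul_mul_sin_sq_le {E A B L d h : ℝ} (hE : 0 ≤ E) (hA₀ : 0 ≤ A)
    (hA : A ≤ 3 / 2) (hB : B ≤ 3 / 2) (hd : |d| ≤ L * |h|) :
    E * d ^ 2 + 4 * A * B * sin (h / 2) ^ 2 ≤ (E * L ^ 2 + 9 / 4) * h ^ 2 := by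
  have hd2 : d ^ 2 ≤ L ^ 2 * h ^ 2 := by
    simpa only [sq_abs, mul_pow] using pow_le_pow_left₀ (abs_nonneg d) hd 2
  have hAB : 4 * A * B ≤ 9 := by nlinarith
  have hsin : sin (h / 2) ^ 2 ≤ (h / 2) ^ 2 := sin_sq_le_sq
  calc E * d ^ 2 + 4 * A * B * sin (h / 2) ^ 2
      ≤ E * (L ^ 2 * h ^ 2) + 9 * (h / 2) ^ 2 := by gcongr
    _ = (E * L ^ 2 + 9 / 4) * h ^ 2 := by ring

theorem denominator_comparability_general
    (α b ε L M : ℝ) (hb : 0 < b)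
    (g : ℝ → ℝ) (hLip : ∀ x y, |g x - g y| ≤ L * |x - y|)
    (hM : ∀ x, |g x| ≤ M) (hsmall : |ε| ^ (1 + α) * b ^ (1 + α) * M ≤ 1/2) :
    ∃ c₁ > 0, ∃ c₂ > 0, ∃ δ > 0, ∀ x y : ℝ, |x - y| ≤ δ →
      c₁ * Real.sin ((x - y) / 2) ^ 2
        ≤ |ε| ^ (2 + 2 * α) * b ^ (2 + 2 * α) * (g x - g y) ^ 2
            + 4 * (1 + ε * |ε| ^ α * b ^ (1 + α) * g x)
                * (1 + ε * |ε| ^ α * b ^ (1 + α) * g y)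
                * Real.sin ((x - y) / 2) ^ 2
      ∧ |ε| ^ (2 + 2 * α) * b ^ (2 + 2 * α) * (g x - g y) ^ 2
            + 4 * (1 + ε * |ε| ^ α * b ^ (1 + α) * g x)
                * (1 + ε * |ε| ^ α * b ^ (1 + α) * g y)
                * Real.sin ((x - y) / 2) ^ 2
          ≤ c₂ * (x - y) ^ 2 := by
  set E := |ε| ^ (2 + 2 * α) * b ^ (2 + 2 * α)
  have hE : 0 ≤ E := by positivity
  have hbα : 0 < b ^ (1 + α) := rpow_pos_of_pos hb _
  have ht : |ε * |ε| ^ α * b ^ (1 + α)| * M ≤ 1 / 2 := by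
    have hM₀ : 0 ≤ M := (abs_nonneg _).trans (hM 0)
    rw [abs_mul, abs_of_pos hbα]
    exact le_trans (by gcongr; exact abs_mul_abs_rpow_le ε α) hsmall
  have hfac := fun x ↦ one_add_mul_mem_Icc ht (hM x)
  refine ⟨1, one_pos, E * L ^ 2 + 9 / 4, by positivity, 1, one_pos, fun x y _ ↦ ?_⟩
  obtain ⟨hx₀, hx⟩ := hfac x
  obtain ⟨hy₀, hy⟩ := hfac y
  rw [one_mul]
  exact ⟨sq_le_add_four_mul_mul_sq hE hx₀ hy₀,
    add_four_mul_mul_sin_sq_le hE (by linarith) hx hy (hLip x y)⟩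

/-- Two-sided comparability `D_α(g)(x,y) ∼ sin²((x−y)/2) ∼ |x−y|²` for `|x−y|` small:
the denominator of the contour dynamics integrand is coercive. -/
theorem denominator_comparability
    (α b ε L M : ℝ) (hα1 : 1 ≤ α) (hα2 : α < 2) (hb : 0 < b) (hε : |ε| < 1/2)
    (g : ℝ → ℝ) (hLip : ∀ x y, |g x - g y| ≤ L * |x - y|)
    (hM : ∀ x, |g x| ≤ M) (hsmall : |ε| ^ (1 + α) * b ^ (1 + α) * M ≤ 1/2) :
    ∃ c₁ > 0, ∃ c₂ > 0, ∃ δ > 0, ∀ x y : ℝ, |x - y| ≤ δ →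
      c₁ * Real.sin ((x - y) / 2) ^ 2
        ≤ |ε| ^ (2 + 2 * α) * b ^ (2 + 2 * α) * (g x - g y) ^ 2
            + 4 * (1 + ε * |ε| ^ α * b ^ (1 + α) * g x)
                * (1 + ε * |ε| ^ α * b ^ (1 + α) * g y)
                * Real.sin ((x - y) / 2) ^ 2
      ∧ |ε| ^ (2 + 2 * α) * b ^ (2 + 2 * α) * (g x - g y) ^ 2
            + 4 * (1 + ε * |ε| ^ α * b ^ (1 + α) * g x)
                * (1 + ε * |ε| ^ α * b ^ (1 + α) * g y)
                * Real.sin ((x - y) / 2) ^ 2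
          ≤ c₂ * (x - y) ^ 2 :=
  denominator_comparability_general α b ε L M hb g hLip hM hsmall
end
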